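/- Let n ≥ 1 and let C_n be the companion matrix of θ_n. Then there exists an n×n integer matrix V with determinant a unit of ℤ (i.e. V ∈ GL(n,ℤ)) such that V² = 4·E_n + C_n, where E_n is the n×n identity matrix. -/

import Mathlib

/-!
The θ_n obey θ_{n+2} = (X + 2) θ_{n+1} - θ_n with θ_0 = 1, θ_1 = X + 3, so the Cassini-type
expression θ_{n+1}² - θ_{n+2} θ_n is independent of n and equals X + 4; that is,
θ_n ∣ θ_{n-1}² - (X + 4). As θ_n annihilates its companion matrix C_n, the matrix
V = θ_{n-1}(C_n) satisfies V² = C_n + 4. Finally θ_n(-4) = (-1)^n, so X + 4 divides θ_n ∓ 1,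
which makes C_n + 4 = V² invertible over ℤ.
-/

open Finset Matrix

/-- The coefficient `c_k^{(n)} = C(n+k,2k) + 2·C(n+k,2k+1)` of `θ_n`. -/
def thetaCoeff (n k : ℕ) : ℤ := ((n + k).choose (2 * k) : ℤ) + 2 * ((n + k).choose (2 * k + 1) : ℤ)

/-- The companion matrix `C_n` of `θ_n`: 1's on the subdiagonal, last column
`(-c_0^{(n)}, …, -c_{n-1}^{(n)})ᵀ`, and 0's elsewhere. -/
def companionTheta (n : ℕ) : Matrix (Fin n) (Fin n) ℤ :=
  Matrix.of fun i j =>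
    if (j : ℕ) = n - 1 then - thetaCoeff n i
    else if (i : ℕ) = (j : ℕ) + 1 then 1 else 0

open Polynomial

namespace Matrix

variable {R : Type*} [CommRing R]

def companion (p : R[X]) (n : ℕ) : Matrix (Fin n) (Fin n) R :=
  of fun i j => if (j : ℕ) = n - 1 then -p.coeff i else if (i : ℕ) = j + 1 then 1 else 0

variable {p : R[X]} {m : ℕ}

theorem companion_mulVec_single_castSucc (i : Fin m) :
    companion p (m + 1) *ᵥ Pi.single i.castSucc 1 = Pi.single i.succ 1 := by
  ext j
  simp [companion, Pi.single_apply, Fin.ext_iff, i.isLt.ne]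

theorem companion_mulVec_single_last :
    companion p (m + 1) *ᵥ Pi.single (Fin.last m) 1 =
      fun i : Fin (m + 1) => -p.coeff (i : ℕ) := by
  ext j
  simp [companion]

theorem companion_pow_mulVec_single_zero (i : Fin (m + 1)) :
    companion p (m + 1) ^ (i : ℕ) *ᵥ Pi.single 0 1 = Pi.single i 1 := by
  induction i using Fin.induction with
  | zero => ext; simp [Pi.single_apply, one_apply]
  | succ i ih =>
    rw [Fin.val_succ, pow_succ', ← mulVec_mulVec, ← Fin.val_castSucc, ih,
      companion_mulVec_single_castSucc]

theorem aeval_companion_mulVec_single_zero (hp : p.Monic) (hdeg : p.natDegree = m + 1) :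
    aeval (companion p (m + 1)) p *ᵥ Pi.single 0 1 = 0 := by
  have hlast : companion p (m + 1) ^ (m + 1) *ᵥ Pi.single 0 1 =
      fun i : Fin (m + 1) => -p.coeff (i : ℕ) := by
    have h := companion_pow_mulVec_single_zero (p := p) (Fin.last m)
    rw [Fin.val_last] at h
    rw [pow_succ', ← mulVec_mulVec, h, companion_mulVec_single_last]
  have hcoeff : p.coeff (m + 1) = 1 := hdeg ▸ hp.coeff_natDegree
  rw [aeval_eq_sum_range, hdeg, Finset.sum_range_succ, hcoeff, one_smul, add_mulVec, hlast,
    sum_mulVec, Finset.sum_range]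
  simp_rw [smul_mulVec, companion_pow_mulVec_single_zero, ← Pi.single_smul, smul_eq_mul, mul_one]
  rw [Finset.univ_sum_single (fun i : Fin (m + 1) => p.coeff i)]
  exact add_neg_cancel _

theorem aeval_companion_self {n : ℕ} (hp : p.Monic) (hdeg : p.natDegree = n) :
    aeval (companion p n) p = 0 := by
  cases n with
  | zero => exact Subsingleton.elim _ _
  | succ m =>
    -- `e₀` is a cyclic vector: `Cⁱ e₀ = eᵢ`, and `p(C)` commutes with `Cⁱ`.
    refine ext_of_mulVec_single fun i => ?_
    have hcomm : Commute (aeval (companion p (m + 1)) p) (companion p (m + 1) ^ (i : ℕ)) := by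
      simpa using (Commute.all p (X ^ (i : ℕ))).map (aeval (companion p (m + 1)))
    rw [← companion_pow_mulVec_single_zero, mulVec_mulVec, hcomm.eq, ← mulVec_mulVec,
      aeval_companion_mulVec_single_zero hp hdeg]
    simp

end Matrix

theorem sq_sub_mul_eq_of_recurrence {R : Type*} [CommRing R] {u : ℕ → R} {a : R}
    (h : ∀ m, u (m + 2) = a * u (m + 1) - u m) (m : ℕ) :
    u (m + 1) ^ 2 - u (m + 2) * u m = u 1 ^ 2 - u 2 * u 0 := by
  induction m with
  | zero => rfl
  | succ m ih => linear_combination (-u (m + 1)) * h (m + 1) + u (m + 2) * h m + ih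

theorem isUnit_sub_algebraMap_of_aeval_eq_zero {R A : Type*} [CommRing R] [Ring A] [Algebra R A]
    {p : R[X]} {a : A} (hp : aeval a p = 0) {r : R} (hr : IsUnit (p.eval r)) :
    IsUnit (a - algebraMap R A r) := by
  obtain ⟨q, hq⟩ := X_sub_C_dvd_sub_C_eval (p := p) (a := r)
  have hfactor : (a - algebraMap R A r) * aeval a q = -algebraMap R A (p.eval r) := by
    simpa [hp] using (congrArg (aeval a) hq).symm
  have hcomm : Commute (a - algebraMap R A r) (aeval a q) := by
    have h := (Commute.all (X - C r) q).map (aeval a)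
    rwa [map_sub, aeval_X, aeval_C] at h
  exact (hcomm.isUnit_mul_iff.mp (hfactor ▸ (hr.map _).neg)).1

theorem Nat.choose_add_two_add_choose (a j : ℕ) :
    (a + 2).choose (j + 2) + a.choose (j + 2) = a.choose j + 2 * (a + 1).choose (j + 2) := by
  simp only [Nat.choose_succ_succ]
  ring

theorem thetaCoeff_eq_zero_of_lt {n k : ℕ} (h : n < k) : thetaCoeff n k = 0 := by
  simp [thetaCoeff, Nat.choose_eq_zero_of_lt, show n + k < 2 * k by omega,
    show n + k < 2 * k + 1 by omega]

theorem thetaCoeff_self (n : ℕ) : thetaCoeff n n = 1 := by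
  simp [thetaCoeff, ← two_mul]

theorem thetaCoeff_zero (n : ℕ) : thetaCoeff n 0 = 2 * n + 1 := by
  simp [thetaCoeff, add_comm]

theorem thetaCoeff_add_two_succ (m k : ℕ) :
    thetaCoeff (m + 2) (k + 1) =
      thetaCoeff (m + 1) k + 2 * thetaCoeff (m + 1) (k + 1) - thetaCoeff m (k + 1) := by
  have h₀ := congrArg ((↑) : ℕ → ℤ) <| Nat.choose_add_two_add_choose (m + k + 1) (2 * k)
  have h₁ := congrArg ((↑) : ℕ → ℤ) <|
    Nat.choose_add_two_add_choose (m + k + 1) (2 * k + 1)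
  push_cast at h₀ h₁
  simp only [thetaCoeff, show m + 2 + (k + 1) = m + k + 1 + 2 by ring,
    show m + 1 + (k + 1) = m + k + 1 + 1 by ring, show m + (k + 1) = m + k + 1 by ring,
    show m + 1 + k = m + k + 1 by ring, show 2 * (k + 1) = 2 * k + 2 by ring]
  linear_combination h₀ + 2 * h₁

noncomputable def thetaPoly (n : ℕ) : ℤ[X] :=
  ∑ k ∈ Finset.range (n + 1), C (thetaCoeff n k) * X ^ k

theorem coeff_thetaPoly (n k : ℕ) : (thetaPoly n).coeff k = thetaCoeff n k := by
  simp only [thetaPoly, finsetSum_coeff, coeff_C_mul_X_pow, Finset.sum_ite_eq, Finset.mem_range]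
  split_ifs with hk
  · rfl
  · exact (thetaCoeff_eq_zero_of_lt (by omega)).symm

theorem natDegree_thetaPoly (n : ℕ) : (thetaPoly n).natDegree = n :=
  natDegree_eq_of_le_of_coeff_ne_zero
    (natDegree_le_iff_coeff_eq_zero.mpr fun k hk => by
      rw [coeff_thetaPoly, thetaCoeff_eq_zero_of_lt (by exact_mod_cast hk)])
    (by simp [coeff_thetaPoly, thetaCoeff_self])

theorem monic_thetaPoly (n : ℕ) : (thetaPoly n).Monic := by
  rw [Monic, leadingCoeff, natDegree_thetaPoly, coeff_thetaPoly, thetaCoeff_self]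

theorem thetaPoly_zero : thetaPoly 0 = 1 := by
  simp [thetaPoly, thetaCoeff]

theorem thetaPoly_one : thetaPoly 1 = X + 3 := by
  norm_num [thetaPoly, Finset.sum_range_succ, thetaCoeff, add_comm]

theorem thetaPoly_add_two (m : ℕ) :
    thetaPoly (m + 2) = (X + 2) * thetaPoly (m + 1) - thetaPoly m := by
  ext (_ | k)
  · simp only [coeff_thetaPoly, thetaCoeff_zero, coeff_sub, mul_coeff_zero, coeff_add,
      coeff_X_zero, coeff_ofNat_zero, zero_add]
    push_cast
    ring
  · simp [add_mul, coeff_thetaPoly, thetaCoeff_add_two_succ]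

theorem thetaPoly_dvd_sq_sub (m : ℕ) : thetaPoly (m + 1) ∣ thetaPoly m ^ 2 - (X + 4) := by
  cases m with
  | zero => exact ⟨-1, by rw [thetaPoly_zero, thetaPoly_one]; ring⟩
  | succ m =>
    refine ⟨thetaPoly m, ?_⟩
    have h := sq_sub_mul_eq_of_recurrence thetaPoly_add_two m
    rw [thetaPoly_add_two 0, thetaPoly_zero, thetaPoly_one] at h
    linear_combination h

theorem eval_thetaPoly_neg_four (n : ℕ) : (thetaPoly n).eval (-4) = (-1) ^ n := by
  induction n using Nat.twoStepInduction with
  | zero => simp [thetaPoly_zero]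
  | one => simp [thetaPoly_one]
  | more m ih₀ ih₁ =>
    rw [thetaPoly_add_two, eval_sub, eval_mul, ih₀, ih₁]
    simp only [eval_add, eval_X, eval_ofNat]
    ring

theorem companionTheta_eq_companion (n : ℕ) :
    companionTheta n = Matrix.companion (thetaPoly n) n := by
  ext i j
  simp [companionTheta, Matrix.companion, coeff_thetaPoly]

theorem stmt_5_general (n : ℕ) :
    ∃ V : Matrix (Fin n) (Fin n) ℤ, IsUnit V.det ∧
      V ^ 2 = (4 : ℤ) • (1 : Matrix (Fin n) (Fin n) ℤ) + companionTheta n := by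
  rcases n with _ | m
  · exact ⟨1, by simp, Subsingleton.elim _ _⟩
  set M := companionTheta (m + 1) with hMdef
  have hM : aeval M (thetaPoly (m + 1)) = 0 := by
    rw [hMdef, companionTheta_eq_companion]
    exact Matrix.aeval_companion_self (monic_thetaPoly _) (natDegree_thetaPoly _)
  have hsq : aeval M (thetaPoly m) ^ 2 = M + 4 := by
    have h := aeval_eq_zero_of_dvd_aeval_eq_zero (thetaPoly_dvd_sq_sub m) hM
    rwa [map_sub, map_pow, map_add, aeval_X, map_ofNat, sub_eq_zero] at h
  have hunit : IsUnit (M - algebraMap ℤ _ (-4)) :=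
    isUnit_sub_algebraMap_of_aeval_eq_zero hM (by simp [eval_thetaPoly_neg_four])
  refine ⟨aeval M (thetaPoly m), ?_, by rw [hsq, add_comm M]; simp⟩
  rw [← Matrix.isUnit_iff_isUnit_det, ← isUnit_pow_iff two_ne_zero, hsq]
  simpa [sub_eq_add_neg] using hunit

theorem stmt_5 (n : ℕ) (hn : 1 ≤ n) :
    ∃ V : Matrix (Fin n) (Fin n) ℤ, IsUnit V.det ∧
      V ^ 2 = (4 : ℤ) • (1 : Matrix (Fin n) (Fin n) ℤ) + companionTheta n :=
  stmt_5_general n
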